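/- Discrete energy conservation for a single Petrov–Galerkin time step (finite-dimensional version): let H be a finite-dimensional real inner product space, C : H → H linear, ν₀ > 0, and let e, a : [t⁰, t¹] → H be polynomial (in t) of degree ≤ k+1. Suppose ∫_{t⁰}^{t¹} α(t)⟪a'(t), w̃(t)⟫ dt = -∫_{t⁰}^{t¹} α(t)⟪e(t), w̃(t)⟫ dt and ∫_{t⁰}^{t¹} α(t)⟪e'(t), z̃(t)⟫ dt = ∫_{t⁰}^{t¹} ν₀⟪C a(t), C z̃(t)⟫ dt hold for every H-valued polynomial test function w̃, z̃ of degree ≤ k, where α(t) = ε₀(χ₁ + 3χ₃‖e(t)‖²). Then W(e(t¹)) + (ν₀/2)‖C a(t¹)‖² = W(e(t⁰)) + (ν₀/2)‖C a(t⁰)‖², where W(x) = (ε₀/2)(χ₁‖x‖² + (3χ₃/2)‖x‖⁴). -/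

import Mathlib

open scoped RealInnerProductSpace

/-- `IsPolyDeg m f` : `f : ℝ → H` is an `H`-valued polynomial of degree at most `m`. -/
def IsPolyDeg (m : ℕ) {H : Type*} [AddCommGroup H] [Module ℝ H] (f : ℝ → H) : Prop :=
  ∃ c : Fin (m + 1) → H, ∀ t : ℝ, f t = ∑ i : Fin (m + 1), t ^ (i : ℕ) • c i

lemma isPolyDeg_continuous {m : ℕ} {H : Type*} [NormedAddCommGroup H] [NormedSpace ℝ H]
    {f : ℝ → H} (hf : IsPolyDeg m f) : Continuous f := by
  obtain ⟨c, hc⟩ := hf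
  have : f = fun t => ∑ i : Fin (m + 1), t ^ (i : ℕ) • c i := funext hc
  rw [this]
  exact continuous_finset_sum _ fun i _ => (continuous_pow _).smul continuous_const

lemma isPolyDeg_deriv {m : ℕ} {H : Type*} [NormedAddCommGroup H] [NormedSpace ℝ H]
    {f f' : ℝ → H} (hf : IsPolyDeg (m + 1) f) (hd : ∀ t, HasDerivAt f (f' t) t) :
    IsPolyDeg m f' := by
  obtain ⟨c, hc⟩ := hf
  refine ⟨fun j => ((j : ℕ) + 1 : ℝ) • c j.succ, fun t => ?_⟩
  have hsum : HasDerivAt (fun t => ∑ i : Fin (m + 2), t ^ (i : ℕ) • c i)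
      (∑ i : Fin (m + 2), (((i : ℕ) : ℝ) * t ^ ((i : ℕ) - 1)) • c i) t :=
    HasDerivAt.fun_sum fun i _ => (hasDerivAt_pow (i : ℕ) t).smul_const (c i)
  have hf' : HasDerivAt f (∑ i : Fin (m + 2), (((i : ℕ) : ℝ) * t ^ ((i : ℕ) - 1)) • c i) t := by
    refine hsum.congr_of_eventuallyEq ?_
    filter_upwards with s using (hc s)
  have := (hd t).unique hf'
  rw [this, Fin.sum_univ_succ]
  simp only [Fin.val_zero, Nat.cast_zero, zero_mul, zero_smul, zero_add, Fin.val_succ]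
  refine Finset.sum_congr rfl fun j _ => ?_
  rw [smul_smul]
  push_cast
  ring_nf

/-- Discrete energy conservation for a single Petrov–Galerkin time step of the
e–a formulation: if the variational identities hold for all polynomial test
functions of degree ≤ k, then the discrete energy is exactly conserved. -/
theorem stmt8
    {H : Type*} [NormedAddCommGroup H] [InnerProductSpace ℝ H]
    [FiniteDimensional ℝ H]
    (C : H →ₗ[ℝ] H) (ν₀ ε₀ χ₁ χ₃ : ℝ) (hν : 0 < ν₀)
    (hε : 0 ≤ ε₀) (hχ₁ : 0 ≤ χ₁) (hχ₃ : 0 ≤ χ₃)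
    (t0 t1 : ℝ) (ht : t0 < t1) (k : ℕ)
    (e e' a a' : ℝ → H)
    (hep : IsPolyDeg (k + 1) e) (hap : IsPolyDeg (k + 1) a)
    (he : ∀ t, HasDerivAt e (e' t) t) (ha : ∀ t, HasDerivAt a (a' t) t)
    (α : ℝ → ℝ) (hα : ∀ t, α t = ε₀ * (χ₁ + 3 * χ₃ * ‖e t‖ ^ 2))
    (h1 : ∀ w : ℝ → H, IsPolyDeg k w →
      ∫ t in t0..t1, α t * ⟪a' t, w t⟫ = -∫ t in t0..t1, α t * ⟪e t, w t⟫)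
    (h2 : ∀ z : ℝ → H, IsPolyDeg k z →
      ∫ t in t0..t1, α t * ⟪e' t, z t⟫ = ∫ t in t0..t1, ν₀ * ⟪C (a t), C (z t)⟫) :
    ε₀ / 2 * (χ₁ * ‖e t1‖ ^ 2 + 3 * χ₃ / 2 * ‖e t1‖ ^ 4) + ν₀ / 2 * ‖C (a t1)‖ ^ 2
      = ε₀ / 2 * (χ₁ * ‖e t0‖ ^ 2 + 3 * χ₃ / 2 * ‖e t0‖ ^ 4)
        + ν₀ / 2 * ‖C (a t0)‖ ^ 2 := by
  -- the continuous linear version of C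
  set Cc : H →L[ℝ] H := LinearMap.toContinuousLinearMap C with hCc
  have hCcC : ∀ x, Cc x = C x := fun x => rfl
  -- continuity facts
  have hce : Continuous e := continuous_iff_continuousAt.2 fun t => (he t).continuousAt
  have hca : Continuous a := continuous_iff_continuousAt.2 fun t => (ha t).continuousAt
  have hce' : Continuous e' := isPolyDeg_continuous (isPolyDeg_deriv hep he)
  have hca' : Continuous a' := isPolyDeg_continuous (isPolyDeg_deriv hap ha)
  have hcα : Continuous α := by
    have : α = fun t => ε₀ * (χ₁ + 3 * χ₃ * ‖e t‖ ^ 2) := funext hα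
    rw [this]; fun_prop
  -- the energy and its derivative
  set F : ℝ → ℝ := fun t =>
    ε₀ / 2 * (χ₁ * ⟪e t, e t⟫ + 3 * χ₃ / 2 * ⟪e t, e t⟫ ^ 2)
      + ν₀ / 2 * ⟪Cc (a t), Cc (a t)⟫ with hF
  set F' : ℝ → ℝ := fun t => α t * ⟪e t, e' t⟫ + ν₀ * ⟪C (a t), C (a' t)⟫ with hF'
  have hCa : ∀ t, HasDerivAt (fun s => Cc (a s)) (Cc (a' t)) t := fun t =>
    (Cc.hasFDerivAt).comp_hasDerivAt t (ha t)
  have hFd : ∀ t, HasDerivAt F (F' t) t := by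
    intro t
    have hE : HasDerivAt (fun s => (⟪e s, e s⟫ : ℝ)) (2 * ⟪e t, e' t⟫) t := by
      have := (he t).inner ℝ (he t)
      simpa [real_inner_comm (e' t) (e t), two_mul] using this
    have hA : HasDerivAt (fun s => (⟪Cc (a s), Cc (a s)⟫ : ℝ)) (2 * ⟪Cc (a t), Cc (a' t)⟫) t := by
      have := (hCa t).inner ℝ (hCa t)
      simpa [real_inner_comm (Cc (a' t)) (Cc (a t)), two_mul] using this
    have h := (((hE.const_mul χ₁).add ((hE.pow 2).const_mul (3 * χ₃ / 2))).const_mul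
        (ε₀ / 2)).add (hA.const_mul (ν₀ / 2))
    refine h.congr_deriv (Eq.symm ?_)
    show α t * ⟪e t, e' t⟫ + ν₀ * ⟪C (a t), C (a' t)⟫ = _
    rw [hα t, ← hCcC (a t), ← hCcC (a' t), ← real_inner_self_eq_norm_sq (e t)]
    push_cast
    ring
  -- interval integrability
  have hI1 : IntervalIntegrable (fun t => α t * ⟪e t, e' t⟫) MeasureTheory.volume t0 t1 :=
    (hcα.mul (hce.inner hce')).intervalIntegrable _ _
  have hI2 : IntervalIntegrable (fun t => ν₀ * ⟪C (a t), C (a' t)⟫)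
      MeasureTheory.volume t0 t1 := by
    have : Continuous fun t => ν₀ * ⟪Cc (a t), Cc (a' t)⟫ :=
      continuous_const.mul ((Cc.continuous.comp hca).inner (Cc.continuous.comp hca'))
    exact this.intervalIntegrable _ _
  -- the integral of F' vanishes
  have key : ∫ t in t0..t1, F' t = 0 := by
    have e1 := h1 e' (isPolyDeg_deriv hep he)
    have e2 := h2 a' (isPolyDeg_deriv hap ha)
    have e3 : ∫ t in t0..t1, α t * ⟪a' t, e' t⟫ = ∫ t in t0..t1, α t * ⟪e' t, a' t⟫ := by
      congr 1; funext t; rw [real_inner_comm]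
    have e4 : ∫ t in t0..t1, α t * ⟪e t, e' t⟫
        = -∫ t in t0..t1, ν₀ * ⟪C (a t), C (a' t)⟫ := by
      rw [← e2, ← e3, e1, neg_neg]
    rw [hF', intervalIntegral.integral_add hI1 hI2, e4, neg_add_cancel]
  have hFTC : ∫ t in t0..t1, F' t = F t1 - F t0 :=
    intervalIntegral.integral_eq_sub_of_hasDerivAt (fun x _ => hFd x) (hI1.add hI2)
  have hFeq : F t1 = F t0 := by
    have := hFTC.symm.trans key
    linarith
  have hnorm : ∀ t, F t = ε₀ / 2 * (χ₁ * ‖e t‖ ^ 2 + 3 * χ₃ / 2 * ‖e t‖ ^ 4)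
      + ν₀ / 2 * ‖C (a t)‖ ^ 2 := by
    intro t
    show ε₀ / 2 * (χ₁ * ⟪e t, e t⟫ + 3 * χ₃ / 2 * ⟪e t, e t⟫ ^ 2)
        + ν₀ / 2 * ⟪Cc (a t), Cc (a t)⟫ = _
    rw [hCcC, real_inner_self_eq_norm_sq, real_inner_self_eq_norm_sq]
    ring
  rw [← hnorm, ← hnorm, hFeq]
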